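/- arXiv:2110.03938 — 4 statements merged into one kernel-verified Lean document; each statement's English description precedes it below -/
import Mathlib

section
/- For every odd integer k ≥ 3 and every even integer n₂ with 0 < n₂ < 2k, one has d(1, n₂) + d(1, 2k - n₂) = 1 and d(1, n₂)·d(1, 2k - n₂) = 0, where d is given by the fractional-part formula d(n₁,n₂) := -1 + frac(-n₁/2) + frac(-n₂/2) + frac(-n₂/k) + frac(-(k n₁ + (k-2) n₂)/(2k)). -/
/-- The fractional part of a rational number. -/
noncomputable def frac (x : ℚ) : ℚ := Int.fract x

/-- The eigenspace dimension formula for the character `(n₁, n₂)` of `C₂ × C₂ₖ`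
with monodromy matrix `A = ((k,0,0,k),(0,k,2,k-2))`. -/
noncomputable def d (k n₁ n₂ : ℤ) : ℚ :=
  -1 + frac (-(n₁ : ℚ) / 2) + frac (-(n₂ : ℚ) / 2) + frac (-(n₂ : ℚ) / k)
    + frac (-((k * n₁ + (k - 2) * n₂ : ℤ) : ℚ) / (2 * k))

lemma fract_int_div (a b : ℤ) (hb : 0 < b) :
    Int.fract ((a : ℚ) / (b : ℚ)) = ((a % b : ℤ) : ℚ) / (b : ℚ) := by
  lift b to ℕ using hb.le
  have h := Int.fract_div_intCast_eq_div_intCast_mod (k := ℚ) (m := a) (n := b)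
  push_cast at h ⊢
  exact h

/-- Evaluation of d k 1 n₂. -/
lemma d_eval (k n₂ : ℤ) (hk : 3 ≤ k) (hkodd : Odd k) (heven : Even n₂)
    (h0 : 0 < n₂) (h2k : n₂ < 2 * k) :
    d k 1 n₂ = if 2 * (n₂ % k) < k then 1 else 0 := by
  obtain ⟨s, hs⟩ := heven
  obtain ⟨t, ht⟩ := hkodd
  have hkpos : (0:ℤ) < k := by omega
  have hkQ : (0:ℚ) < (k:ℚ) := by exact_mod_cast hkpos
  set r := n₂ % k with hr
  set q := n₂ / k with hq
  have hrq : n₂ = k * q + r := (Int.mul_ediv_add_emod n₂ k).symm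
  have hr0 : 0 ≤ r := Int.emod_nonneg n₂ (by omega)
  have hrk : r < k := Int.emod_lt_of_pos n₂ hkpos
  -- r ≠ 0 : k ∣ n₂ would force n₂ = k odd, contradiction with even
  have hrne : r ≠ 0 := by
    intro h
    have : n₂ = k * q := by omega
    have hq1 : q = 1 := by
      have h1 : 0 < q := by nlinarith
      have h2 : q < 2 := by nlinarith
      omega
    rw [hq1, h] at hrq
    omega
  -- 2r ≠ k since k odd
  have h2r : 2 * r ≠ k := by omega
  -- compute all four fracts
  have f1 : frac (-(1:ℚ) / 2) = 1/2 := by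
    show Int.fract _ = 1/2
    norm_num [Int.fract]
  have f2 : frac (-(n₂:ℚ) / 2) = 0 := by
    show Int.fract _ = 0
    have : -(n₂:ℚ)/2 = ((-s : ℤ) : ℚ) := by rw [hs]; push_cast; ring
    rw [this, Int.fract_intCast]
  have f3 : frac (-(n₂:ℚ) / k) = ((k - r : ℤ) : ℚ) / k := by
    show Int.fract _ = _
    have : -(n₂:ℚ) = ((-n₂ : ℤ) : ℚ) := by push_cast; ring
    rw [this, fract_int_div _ _ hkpos]
    congr 2
    have : -n₂ = (k - r) + k * (-q - 1) := by linear_combination -hrq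
    rw [this, Int.add_mul_emod_self_left, Int.emod_eq_of_lt (by omega) (by omega)]
  have key : -(k * 1 + (k - 2) * n₂) =
      (if 2 * r < k then k + 2*r else 2*r - k) + 2*k*(q - s - if 2 * r < k then 1 else 0) := by
    split <;> linear_combination 2 * hrq - k * hs
  have f4 : frac (-((k * 1 + (k - 2) * n₂ : ℤ) : ℚ) / (2 * k))
      = ((if 2 * r < k then k + 2*r else 2*r - k : ℤ) : ℚ) / (2 * k) := by
    show Int.fract _ = _
    have h2kQ : ((2 * k : ℤ) : ℚ) = 2 * (k : ℚ) := by push_cast; ring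
    rw [← h2kQ, ← Int.cast_neg, fract_int_div _ _ (by omega)]
    rw [key, Int.add_mul_emod_self_left]
    congr 2
    split <;> exact Int.emod_eq_of_lt (by omega) (by omega)
  unfold d
  rw [show (((1:ℤ)):ℚ) = (1:ℚ) by norm_num] at *
  rw [f1, f2, f3, f4]
  have hkne : (k:ℚ) ≠ 0 := ne_of_gt hkQ
  split
  · push_cast
    field_simp
    ring
  · push_cast
    field_simp
    ring

theorem stmt3 (k : ℤ) (hk : 3 ≤ k) (hkodd : Odd k) (n₂ : ℤ)
    (heven : Even n₂) (h0 : 0 < n₂) (h2k : n₂ < 2 * k) :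
    d k 1 n₂ + d k 1 (2 * k - n₂) = 1 ∧ d k 1 n₂ * d k 1 (2 * k - n₂) = 0 := by
  have hkpos : (0:ℤ) < k := by omega
  have h1 := d_eval k n₂ hk hkodd heven h0 h2k
  have h2 := d_eval k (2*k - n₂) hk hkodd (by obtain ⟨s,hs⟩ := heven; exact ⟨k - s, by omega⟩)
      (by omega) (by omega)
  have hr0 : 0 ≤ n₂ % k := Int.emod_nonneg n₂ (by omega)
  have hrk : n₂ % k < k := Int.emod_lt_of_pos n₂ hkpos
  have hrne : n₂ % k ≠ 0 := by
    intro h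
    obtain ⟨s, hs⟩ := heven
    obtain ⟨t, ht⟩ := hkodd
    have hrq : n₂ = k * (n₂ / k) + n₂ % k := (Int.mul_ediv_add_emod n₂ k).symm
    have hq1 : n₂ / k = 1 := by
      have h1 : 0 < n₂ / k := by nlinarith
      have h2 : n₂ / k < 2 := by nlinarith
      omega
    rw [hq1, h] at hrq
    omega
  have hmod : (2*k - n₂) % k = k - n₂ % k := by
    have : 2*k - n₂ = (k - n₂ % k) + k * (1 - n₂ / k) := by
      linear_combination Int.mul_ediv_add_emod n₂ k
    rw [this, Int.add_mul_emod_self_left, Int.emod_eq_of_lt (by omega) (by omega)]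
  rw [hmod] at h2
  obtain ⟨t, ht⟩ := hkodd
  have h2r : 2 * (n₂ % k) ≠ k := by omega
  rw [h1, h2]
  rcases lt_or_gt_of_ne h2r with h | h
  · rw [if_pos h, if_neg (by omega)]; norm_num
  · rw [if_neg (by omega), if_pos (by omega)]; norm_num
end

section
/- For every odd integer k ≥ 3, the sum of d(n₁, n₂) over all pairs (n₁, n₂) ≠ (0,0) with n₁ ∈ {0,1}, 0 ≤ n₂ < 2k and n₁ + n₂ even, equals k - 1, where d(n₁,n₂) := -1 + frac(-n₁/2) + frac(-n₂/2) + frac(-n₂/k) + frac(-(k n₁ + (k-2) n₂)/(2k)). -/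
private lemma fract_eq_of (x r : ℚ) (n : ℤ) (h : x = n + r) (h0 : 0 ≤ r) (h1 : r < 1) :
    Int.fract x = r := by
  subst h; rw [Int.fract_intCast_add, Int.fract_eq_self.mpr ⟨h0, h1⟩]

private lemma frac_div (a k : ℤ) (hk : 0 < k) :
    Int.fract ((a : ℚ) / k) = ((a % k : ℤ) : ℚ) / k := by
  have hk0 : (k : ℚ) ≠ 0 := by exact_mod_cast hk.ne'
  apply fract_eq_of _ _ (a / k)
  · have h2 : (a : ℚ) = (k : ℚ) * ((a / k : ℤ) : ℚ) + ((a % k : ℤ) : ℚ) := by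
      exact_mod_cast (Int.mul_ediv_add_emod a k).symm
    rw [h2]; field_simp
  · exact div_nonneg (by exact_mod_cast Int.emod_nonneg a hk.ne') (by exact_mod_cast hk.le)
  · rw [div_lt_one (by exact_mod_cast hk)]
    exact_mod_cast Int.emod_lt_of_pos a hk

private lemma not_dvd (a k : ℤ) (hk : 0 < k) (h0 : 0 < a) (h1 : a < 2 * k) (hne : a ≠ k) :
    ¬ k ∣ a := by
  rintro ⟨c, rfl⟩
  have hc1 : c ≤ 1 := by
    by_contra hc
    push_neg at hc
    have h2 : (2:ℤ) ≤ c := hc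
    have := mul_le_mul_of_nonneg_left h2 hk.le
    linarith
  have hc2 : 1 ≤ c := by
    by_contra hc
    push_neg at hc
    have h2 : c ≤ 0 := by omega
    have := mul_nonpos_of_nonneg_of_nonpos hk.le h2
    linarith
  have : c = 1 := le_antisymm hc1 hc2
  subst this
  simp at hne

private lemma fract_ne (a k : ℤ) (hk : 0 < k) (h0 : 0 < a) (h1 : a < 2 * k) (hne : a ≠ k) :
    Int.fract ((a : ℚ) / k) ≠ 0 := by
  have hk0 : (k : ℚ) ≠ 0 := by exact_mod_cast hk.ne'
  intro h
  rw [frac_div a k hk, div_eq_zero_iff] at h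
  rcases h with h | h
  · exact not_dvd a k hk h0 h1 hne (Int.dvd_of_emod_eq_zero (by exact_mod_cast h))
  · exact hk0 h

private lemma key0 (k m : ℤ) (hk : 3 ≤ k) (hkodd : Odd k) (hm : 1 ≤ m) (hm' : m ≤ k - 1) :
    d k 0 (2 * m) = 0 := by
  have hkpos : (0:ℤ) < k := by omega
  have hk0 : (k : ℚ) ≠ 0 := by exact_mod_cast hkpos.ne'
  have hne : 2 * m ≠ k := by rintro rfl; exact (Int.not_odd_iff_even.mpr ⟨m, by ring⟩) hkodd
  have hf := fract_ne (2*m) k hkpos (by omega) (by omega) hne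
  unfold d frac
  have e1 : -((0:ℤ) : ℚ) / 2 = 0 := by norm_num
  have e2 : -(((2*m : ℤ)) : ℚ) / 2 = ((-m : ℤ) : ℚ) := by push_cast; ring
  have e3 : -(((2*m : ℤ)) : ℚ) / k = -(((2*m : ℤ) : ℚ) / k) := by push_cast; ring
  have e4 : -((k * 0 + (k - 2) * (2*m) : ℤ) : ℚ) / (2 * k)
      = ((-m : ℤ) : ℚ) + ((2*m : ℤ) : ℚ) / k := by
    push_cast; field_simp; ring
  rw [e1, e2, e3, e4, Int.fract_zero, Int.fract_intCast, Int.fract_intCast_add,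
    Int.fract_neg hf]
  ring

private lemma key1 (k m : ℤ) (hk : 3 ≤ k) (hkodd : Odd k) (hm : 0 ≤ m) (hm' : m ≤ k - 1)
    (hne : 2 * m + 1 ≠ k) : d k 1 (2 * m + 1) = 1 := by
  have hkpos : (0:ℤ) < k := by omega
  have hk0 : (k : ℚ) ≠ 0 := by exact_mod_cast hkpos.ne'
  have hf := fract_ne (2*m+1) k hkpos (by omega) (by omega) hne
  unfold d frac
  have e1 : Int.fract (-((1:ℤ) : ℚ) / 2) = 1/2 := by
    apply fract_eq_of _ _ (-1) <;> norm_num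
  have e2 : Int.fract (-(((2*m+1 : ℤ)) : ℚ) / 2) = 1/2 := by
    apply fract_eq_of _ _ (-m-1) <;> [push_cast; skip; skip] <;> norm_num; ring
  have e3 : -(((2*m+1 : ℤ)) : ℚ) / k = -(((2*m+1 : ℤ) : ℚ) / k) := by push_cast; ring
  have e4 : -((k * 1 + (k - 2) * (2*m+1) : ℤ) : ℚ) / (2 * k)
      = ((-m-1 : ℤ) : ℚ) + ((2*m+1 : ℤ) : ℚ) / k := by
    push_cast; field_simp; ring
  rw [e1, e2, e3, e4, Int.fract_intCast_add, Int.fract_neg hf]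
  ring

private lemma key1k (k : ℤ) (hk : 3 ≤ k) (hkodd : Odd k) : d k 1 k = 0 := by
  obtain ⟨j, hj⟩ := hkodd
  have hkpos : (0:ℤ) < k := by omega
  have hk0 : (k : ℚ) ≠ 0 := by exact_mod_cast hkpos.ne'
  unfold d frac
  have e1 : Int.fract (-((1:ℤ) : ℚ) / 2) = 1/2 := by
    apply fract_eq_of _ _ (-1) <;> norm_num
  have e2 : Int.fract (-((k : ℤ) : ℚ) / 2) = 1/2 := by
    apply fract_eq_of _ _ (-j-1)
    · subst hj; push_cast; ring
    · norm_num
    · norm_num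
  have e3 : -((k : ℤ) : ℚ) / k = ((-1 : ℤ) : ℚ) := by push_cast; field_simp
  have e4 : -((k * 1 + (k - 2) * k : ℤ) : ℚ) / (2 * k) = ((-j : ℤ) : ℚ) := by
    rw [div_eq_iff (by simpa using hk0 : 2 * (k:ℚ) ≠ 0)]
    subst hj; push_cast; ring
  rw [e1, e2, e3, e4, Int.fract_intCast, Int.fract_intCast]
  ring

set_option maxHeartbeats 2000000 in
theorem stmt6 (k : ℤ) (hk : 3 ≤ k) (hkodd : Odd k) :
    ∑ p ∈ ((({0, 1} : Finset ℤ) ×ˢ Finset.Icc 0 (2 * k - 1)).erase (0, 0)).filter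
        (fun p => Even (p.1 + p.2)),
      d k p.1 p.2 = k - 1 := by
  have hkpos : (0:ℤ) < k := by omega
  set T := (({0, 1} : Finset ℤ) ×ˢ Finset.Icc 0 (2 * k - 1)).filter
      (fun p => Even (p.1 + p.2)) with hT
  have hmem : ((0,0) : ℤ × ℤ) ∈ T := by
    rw [hT, Finset.mem_filter, Finset.mem_product]
    exact ⟨⟨by simp, Finset.mem_Icc.mpr ⟨le_refl 0, by omega⟩⟩, by simp⟩
  have hsplit : (d k 0 0) + ∑ p ∈ T.erase (0,0), d k p.1 p.2 = ∑ p ∈ T, d k p.1 p.2 :=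
    Finset.add_sum_erase T (fun p => d k p.1 p.2) hmem
  have hd00 : d k 0 0 = -1 := by
    unfold d frac
    push_cast
    norm_num
  rw [Finset.filter_erase]
  -- compute ∑ over T
  have hTsum : ∑ p ∈ T, d k p.1 p.2 = k - 2 := by
    rw [hT, Finset.sum_filter, Finset.sum_product]
    rw [Finset.sum_pair (by norm_num : (0:ℤ) ≠ 1)]
    have hS0 : ∑ n ∈ Finset.Icc (0:ℤ) (2*k-1), (if Even ((0:ℤ) + n) then d k 0 n else 0)
        = -1 := by
      rw [Finset.sum_eq_single_of_mem (0 : ℤ) (by simp; omega)]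
      · simpa using hd00
      · intro n hn hne
        simp only [Finset.mem_Icc] at hn
        by_cases h : Even ((0:ℤ) + n)
        · rw [if_pos h]
          obtain ⟨r, hr⟩ := h
          rw [show n = 2 * r by omega]
          exact key0 k r hk hkodd (by omega) (by omega)
        · rw [if_neg h]
    have hS1 : ∑ n ∈ Finset.Icc (0:ℤ) (2*k-1), (if Even ((1:ℤ) + n) then d k 1 n else 0)
        = k - 1 := by
      have hkmem : k ∈ Finset.Icc (0:ℤ) (2*k-1) := by simp; omega
      rw [← Finset.add_sum_erase _ _ hkmem]
      have hke : Even ((1:ℤ) + k) := by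
        obtain ⟨j, hj⟩ := hkodd; exact ⟨j+1, by omega⟩
      rw [if_pos hke, key1k k hk hkodd]
      have heq : ∑ n ∈ (Finset.Icc (0:ℤ) (2*k-1)).erase k,
          (if Even ((1:ℤ) + n) then d k 1 n else 0)
          = ∑ n ∈ (Finset.Icc (0:ℤ) (2*k-1)).erase k,
          (if Even ((1:ℤ) + n) then (1:ℚ) else 0) := by
        apply Finset.sum_congr rfl
        intro n hn
        simp only [Finset.mem_erase, Finset.mem_Icc] at hn
        by_cases h : Even ((1:ℤ) + n)
        · rw [if_pos h, if_pos h]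
          obtain ⟨r, hr⟩ := h
          rw [show n = 2 * (r - 1) + 1 by omega]
          exact key1 k (r-1) hk hkodd (by omega) (by omega) (by omega)
        · rw [if_neg h, if_neg h]
      rw [heq]
      have hcount : ∑ n ∈ (Finset.Icc (0:ℤ) (2*k-1)).erase k,
          (if Even ((1:ℤ) + n) then (1:ℚ) else 0) = k - 1 := by
        rw [Finset.sum_boole]
        have hset : ((Finset.Icc (0:ℤ) (2*k-1)).erase k).filter (fun n => Even (1+n))
            = ((Finset.Icc (0:ℤ) (k-1)).erase ((k-1)/2)).image (fun m => 2*m+1) := by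
          obtain ⟨j, hj⟩ := hkodd
          ext n
          simp only [Finset.mem_filter, Finset.mem_erase, Finset.mem_Icc, Finset.mem_image]
          constructor
          · rintro ⟨⟨hne, h0, h1⟩, ⟨r, hr⟩⟩
            exact ⟨r - 1, ⟨by omega, by omega, by omega⟩, by omega⟩
          · rintro ⟨m, ⟨hm1, hm2, hm3⟩, rfl⟩
            exact ⟨⟨by omega, by omega, by omega⟩, ⟨m+1, by ring⟩⟩
        rw [hset, Finset.card_image_of_injective _ (fun a b h => by omega),
          Finset.card_erase_of_mem (by rw [Finset.mem_Icc]; omega), Int.card_Icc]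
        have ht : (k - 1 + 1 - 0).toNat = k.toNat := by omega
        rw [ht]
        have h1 : 1 ≤ k.toNat := by omega
        have htk : (k.toNat : ℚ) = (k : ℚ) := by exact_mod_cast Int.toNat_of_nonneg hkpos.le
        rw [Nat.cast_sub h1, htk, Nat.cast_one]
      rw [hcount]; ring
    rw [hS0, hS1]; ring
  have : ∑ p ∈ T.erase (0,0), d k p.1 p.2 = (k : ℚ) - 2 - d k 0 0 := by
    linarith [hsplit, hTsum]
  rw [this, hd00]; ring
end

section
/- For every odd integer k ≥ 3, one has (1/2)·Σ d(n₁,n₂)·d(n₁, 2k - n₂) = (k-1)/2, where the sum runs over all pairs (n₁, n₂) with n₁ ∈ {0,1}, 0 < n₂ < 2k, n₂ ≠ k (i.e. characters n of C₂ × C₂ₖ with 2n ≠ 0), and d(n₁,n₂) := -1 + frac(-n₁/2) + frac(-n₂/2) + frac(-n₂/k) + frac(-(k n₁ + (k-2) n₂)/(2k)). -/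
lemma frac_div_s7 {x : ℚ} (a b q : ℤ) (hb : 0 < b) (hx : x = (a:ℚ)/(b:ℚ))
    (h1 : q*b ≤ a) (h2 : a < (q+1)*b) :
    frac x = ((a:ℚ) - (q:ℚ)*(b:ℚ))/(b:ℚ) := by
  have hb' : (0:ℚ) < (b:ℚ) := by exact_mod_cast hb
  have hq : x - (q:ℤ) = ((a:ℚ) - (q:ℚ)*(b:ℚ))/(b:ℚ) := by
    rw [hx]; field_simp
  have hxx : x = (x - (q:ℤ)) + (q:ℤ) := by ring
  rw [frac, hxx, Int.fract_add_intCast, hq, Int.fract_eq_self.mpr]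
  constructor
  · apply div_nonneg _ hb'.le
    have : (0:ℚ) ≤ ((a - q*b : ℤ) : ℚ) := by exact_mod_cast sub_nonneg.mpr h1
    push_cast at this; linarith
  · rw [div_lt_one hb']
    have : ((a:ℤ):ℚ) < (((q+1)*b : ℤ):ℚ) := by exact_mod_cast h2
    push_cast at this; linarith

lemma d10 (k n m : ℤ) (hn : n = 2*m+1) (h1 : 0 < n) (h2 : n < k) : d k 1 n = 1 := by
  subst hn
  have hk : 0 < k := by omega
  rw [d, frac_div_s7 (-1) 2 (-1) (by norm_num) (by push_cast; ring) (by omega) (by omega),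
    frac_div_s7 (-(2*m+1)) 2 (-(m+1)) (by norm_num) (by push_cast; ring) (by omega) (by omega),
    frac_div_s7 (-(2*m+1)) k (-1) hk (by push_cast; ring) (by omega) (by omega),
    frac_div_s7 (-(k*1+(k-2)*(2*m+1))) (2*k) (-(m+1)) (by omega) (by push_cast; ring)
      (by nlinarith) (by nlinarith)]
  have hk0 : (k:ℚ) ≠ 0 := by exact_mod_cast hk.ne'
  push_cast
  field_simp
  ring

lemma d11 (k n m : ℤ) (hn : n = 2*m+1) (h1 : k < n) (h2 : n < 2*k) : d k 1 n = 1 := by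
  subst hn
  have hk : 0 < k := by omega
  rw [d, frac_div_s7 (-1) 2 (-1) (by norm_num) (by push_cast; ring) (by omega) (by omega),
    frac_div_s7 (-(2*m+1)) 2 (-(m+1)) (by norm_num) (by push_cast; ring) (by omega) (by omega),
    frac_div_s7 (-(2*m+1)) k (-2) hk (by push_cast; ring) (by omega) (by omega),
    frac_div_s7 (-(k*1+(k-2)*(2*m+1))) (2*k) (-m) (by omega) (by push_cast; ring)
      (by nlinarith) (by nlinarith)]
  have hk0 : (k:ℚ) ≠ 0 := by exact_mod_cast hk.ne'
  push_cast
  field_simp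
  ring

lemma z1 (k n m : ℤ) (hn : n = 2*m) (h1 : k < 2*n) (h2 : 2*n < 2*k) : d k 1 n = 0 := by
  subst hn
  have hk : 0 < k := by omega
  rw [d, frac_div_s7 (-1) 2 (-1) (by norm_num) (by push_cast; ring) (by omega) (by omega),
    frac_div_s7 (-(2*m)) 2 (-m) (by norm_num) (by push_cast; ring) (by omega) (by omega),
    frac_div_s7 (-(2*m)) k (-1) hk (by push_cast; ring) (by omega) (by omega),
    frac_div_s7 (-(k*1+(k-2)*(2*m))) (2*k) (-m) (by omega) (by push_cast; ring)
      (by nlinarith) (by nlinarith)]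
  have hk0 : (k:ℚ) ≠ 0 := by exact_mod_cast hk.ne'
  push_cast
  field_simp
  ring

lemma z2 (k n m : ℤ) (hn : n = 2*m) (h1 : 3*k < 2*n) (h2 : 2*n < 4*k) : d k 1 n = 0 := by
  subst hn
  have hk : 0 < k := by omega
  rw [d, frac_div_s7 (-1) 2 (-1) (by norm_num) (by push_cast; ring) (by omega) (by omega),
    frac_div_s7 (-(2*m)) 2 (-m) (by norm_num) (by push_cast; ring) (by omega) (by omega),
    frac_div_s7 (-(2*m)) k (-2) hk (by push_cast; ring) (by omega) (by omega),
    frac_div_s7 (-(k*1+(k-2)*(2*m))) (2*k) (-m+1) (by omega) (by push_cast; ring)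
      (by nlinarith) (by nlinarith)]
  have hk0 : (k:ℚ) ≠ 0 := by exact_mod_cast hk.ne'
  push_cast
  field_simp
  ring

lemma z3 (k n m : ℤ) (hn : n = 2*m+1) (h1 : k < 2*n) (h2 : 2*n < 2*k) : d k 0 n = 0 := by
  subst hn
  have hk : 0 < k := by omega
  rw [d, frac_div_s7 0 2 0 (by norm_num) (by push_cast; ring) (by omega) (by omega),
    frac_div_s7 (-(2*m+1)) 2 (-(m+1)) (by norm_num) (by push_cast; ring) (by omega) (by omega),
    frac_div_s7 (-(2*m+1)) k (-1) hk (by push_cast; ring) (by omega) (by omega),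
    frac_div_s7 (-(k*0+(k-2)*(2*m+1))) (2*k) (-m) (by omega) (by push_cast; ring)
      (by nlinarith) (by nlinarith)]
  have hk0 : (k:ℚ) ≠ 0 := by exact_mod_cast hk.ne'
  push_cast
  field_simp
  ring

lemma z4 (k n m : ℤ) (hn : n = 2*m+1) (h1 : 3*k < 2*n) (h2 : 2*n < 4*k) : d k 0 n = 0 := by
  subst hn
  have hk : 0 < k := by omega
  rw [d, frac_div_s7 0 2 0 (by norm_num) (by push_cast; ring) (by omega) (by omega),
    frac_div_s7 (-(2*m+1)) 2 (-(m+1)) (by norm_num) (by push_cast; ring) (by omega) (by omega),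
    frac_div_s7 (-(2*m+1)) k (-2) hk (by push_cast; ring) (by omega) (by omega),
    frac_div_s7 (-(k*0+(k-2)*(2*m+1))) (2*k) (-m+1) (by omega) (by push_cast; ring)
      (by nlinarith) (by nlinarith)]
  have hk0 : (k:ℚ) ≠ 0 := by exact_mod_cast hk.ne'
  push_cast
  field_simp
  ring

lemma z5 (k n m : ℤ) (hn : n = 2*m) (h1 : 0 < n) (h2 : n < k) : d k 0 n = 0 := by
  subst hn
  have hk : 0 < k := by omega
  rw [d, frac_div_s7 0 2 0 (by norm_num) (by push_cast; ring) (by omega) (by omega),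
    frac_div_s7 (-(2*m)) 2 (-m) (by norm_num) (by push_cast; ring) (by omega) (by omega),
    frac_div_s7 (-(2*m)) k (-1) hk (by push_cast; ring) (by omega) (by omega),
    frac_div_s7 (-(k*0+(k-2)*(2*m))) (2*k) (-m) (by omega) (by push_cast; ring)
      (by nlinarith) (by nlinarith)]
  have hk0 : (k:ℚ) ≠ 0 := by exact_mod_cast hk.ne'
  push_cast
  field_simp
  ring

lemma z6 (k n m : ℤ) (hn : n = 2*m) (h1 : k < n) (h2 : n < 2*k) : d k 0 n = 0 := by
  subst hn
  have hk : 0 < k := by omega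
  rw [d, frac_div_s7 0 2 0 (by norm_num) (by push_cast; ring) (by omega) (by omega),
    frac_div_s7 (-(2*m)) 2 (-m) (by norm_num) (by push_cast; ring) (by omega) (by omega),
    frac_div_s7 (-(2*m)) k (-2) hk (by push_cast; ring) (by omega) (by omega),
    frac_div_s7 (-(k*0+(k-2)*(2*m))) (2*k) (-m+1) (by omega) (by push_cast; ring)
      (by nlinarith) (by nlinarith)]
  have hk0 : (k:ℚ) ≠ 0 := by exact_mod_cast hk.ne'
  push_cast
  field_simp
  ring

lemma termA (k n : ℤ) (hk : 3 ≤ k) (hkodd : Odd k) (h1 : 1 ≤ n) (h2 : n ≤ 2*k-1)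
    (h3 : n ≠ k) :
    d k 0 n * d k 0 (2*k-n) + d k 1 n * d k 1 (2*k-n) = if Odd n then 1 else 0 := by
  obtain ⟨j, hj⟩ := hkodd
  rcases Int.even_or_odd n with ⟨m, hm⟩ | ⟨m, hm⟩
  · -- n even
    rw [if_neg (by simp [Int.not_odd_iff_even.mpr ⟨m, hm⟩] )]
    have hd0 : d k 0 n = 0 := by
      rcases lt_or_gt_of_ne h3 with h | h
      · exact z5 k n m (by omega) (by omega) h
      · exact z6 k n m (by omega) h (by omega)
    have hd1 : d k 1 n * d k 1 (2*k-n) = 0 := by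
      have hcase : (2*n < k) ∨ (k < 2*n ∧ 2*n < 2*k) ∨ (2*k < 2*n ∧ 2*n < 3*k)
          ∨ (3*k < 2*n) := by omega
      rcases hcase with h | ⟨ha, hb⟩ | ⟨ha, hb⟩ | h
      · rw [z2 k (2*k-n) (k-m) (by omega) (by omega) (by omega), mul_zero]
      · rw [z1 k n m (by omega) ha hb, zero_mul]
      · rw [z1 k (2*k-n) (k-m) (by omega) (by omega) (by omega), mul_zero]
      · rw [z2 k n m (by omega) h (by omega), zero_mul]
    rw [hd0, hd1, zero_mul, add_zero]
  · -- n odd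
    rw [if_pos ⟨m, hm⟩]
    have hd1 : d k 1 n = 1 := by
      rcases lt_or_gt_of_ne h3 with h | h
      · exact d10 k n m hm (by omega) h
      · exact d11 k n m hm h (by omega)
    have hd1' : d k 1 (2*k-n) = 1 := by
      rcases lt_or_gt_of_ne h3 with h | h
      · exact d11 k (2*k-n) (k-m-1) (by omega) (by omega) (by omega)
      · exact d10 k (2*k-n) (k-m-1) (by omega) (by omega) (by omega)
    have hd0 : d k 0 n * d k 0 (2*k-n) = 0 := by
      have hcase : (2*n < k) ∨ (k < 2*n ∧ 2*n < 2*k) ∨ (2*k < 2*n ∧ 2*n < 3*k)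
          ∨ (3*k < 2*n) := by omega
      rcases hcase with h | ⟨ha, hb⟩ | ⟨ha, hb⟩ | h
      · rw [z4 k (2*k-n) (k-m-1) (by omega) (by omega) (by omega), mul_zero]
      · rw [z3 k n m hm ha hb, zero_mul]
      · rw [z3 k (2*k-n) (k-m-1) (by omega) (by omega) (by omega), mul_zero]
      · rw [z4 k n m hm h (by omega), zero_mul]
    rw [hd0, hd1, hd1', zero_add, mul_one]

theorem stmt7 (k : ℤ) (hk : 3 ≤ k) (hkodd : Odd k) :
    (1 / 2 : ℚ) *
      ∑ p ∈ (({0, 1} : Finset ℤ) ×ˢ ((Finset.Icc 1 (2 * k - 1)).erase k)),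
        d k p.1 p.2 * d k p.1 (2 * k - p.2) = (k - 1) / 2 := by
  rw [Finset.sum_product]
  rw [show ({0, 1} : Finset ℤ) = insert 0 {1} from rfl,
    Finset.sum_insert (by norm_num), Finset.sum_singleton, ← Finset.sum_add_distrib]
  have hcongr : ∑ n ∈ (Finset.Icc 1 (2*k-1)).erase k,
      (d k 0 n * d k 0 (2*k-n) + d k 1 n * d k 1 (2*k-n))
      = ∑ n ∈ (Finset.Icc 1 (2*k-1)).erase k, (if Odd n then (1:ℚ) else 0) := by
    apply Finset.sum_congr rfl
    intro n hn
    rw [Finset.mem_erase, Finset.mem_Icc] at hn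
    exact termA k n hk hkodd hn.2.1 hn.2.2 hn.1
  rw [hcongr]
  have hkmem : k ∈ Finset.Icc (1:ℤ) (2*k-1) := by
    rw [Finset.mem_Icc]; omega
  rw [Finset.sum_erase_eq_sub hkmem, if_pos hkodd]
  have hfilter : (Finset.Icc (1:ℤ) (2*k-1)).filter (fun n => Odd n)
      = (Finset.Icc (0:ℤ) (k-1)).image (fun i => 2*i+1) := by
    ext x
    simp only [Finset.mem_filter, Finset.mem_Icc, Finset.mem_image]
    constructor
    · rintro ⟨⟨ha, hb⟩, ⟨i, rfl⟩⟩
      exact ⟨i, ⟨by omega, by omega⟩, rfl⟩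
    · rintro ⟨i, ⟨h0, h1⟩, rfl⟩
      exact ⟨⟨by omega, by omega⟩, ⟨i, rfl⟩⟩
  have hboole : ∑ n ∈ Finset.Icc (1:ℤ) (2*k-1), (if Odd n then (1:ℚ) else 0)
      = ((Finset.Icc (1:ℤ) (2*k-1)).filter (fun n => Odd n)).card := by
    simp [Finset.sum_boole]
  rw [hboole, hfilter, Finset.card_image_of_injective _ (fun a b h => by omega),
    Int.card_Icc]
  have : ((k - 1 + 1 - 0).toNat : ℚ) = (k : ℚ) := by
    have : (k - 1 + 1 - 0).toNat = k.toNat := by omega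
    rw [this]
    exact_mod_cast Int.toNat_of_nonneg (by omega)
  rw [this]
  ring
end

section
/- For every odd integer k ≥ 3, Σ d(n₁,n₂)·d(n₁, 2k - n₂) taken over pairs with n₁ + n₂ odd, n₁ ∈ {0,1}, 0 < n₂ < 2k, n₂ ≠ k, equals 0; equivalently, every product d(n)·d(-n) over anti-invariant characters vanishes, where d(n₁,n₂) := -1 + frac(-n₁/2) + frac(-n₂/2) + frac(-n₂/k) + frac(-(k n₁ + (k-2) n₂)/(2k)). -/
/-!
On an anti-invariant character `n₁ + n₂ = 2m + 1`, so `frac (-n₁/2) + frac (-n₂/2) = 1/2` and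
`-(k n₁ + (k - 2) n₂) / (2k) = n₂/k - 1/2 - m`. Thus `d k n₁ n₂` depends only on `x = n₂ / k`:
it is `1` when `0 < fract x < 1/2` and `0` otherwise. Replacing `n₂` by `2k - n₂` replaces
`fract x` by `1 - fract x` (or keeps it `0`), so each product has a vanishing factor.
-/

noncomputable def dAnti (x : ℚ) : ℚ := frac (-x) + frac (x - 1 / 2) - 1 / 2

lemma dAnti_add_intCast (x : ℚ) (m : ℤ) : dAnti (x + m) = dAnti x := by
  simp only [dAnti, frac, neg_add', Int.fract_sub_intCast, add_sub_right_comm x,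
    Int.fract_add_intCast]

lemma dAnti_eq_zero_of_fract_eq_zero {x : ℚ} (h : Int.fract x = 0) : dAnti x = 0 := by
  have h_half : Int.fract (x - 1 / 2) = 1 / 2 :=
    Int.fract_eq_iff.2 ⟨by norm_num, by norm_num, ⌊x⌋ - 1, by
      rw [Int.fract, sub_eq_zero] at h; push_cast; linarith⟩
  simp only [dAnti, frac, Int.fract_neg_eq_zero.2 h, h_half]
  norm_num

lemma dAnti_eq_zero_of_half_le_fract {x : ℚ} (h : 1 / 2 ≤ Int.fract x) : dAnti x = 0 := by
  have h_neg : Int.fract (-x) = 1 - Int.fract x := Int.fract_neg (by linarith)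
  have h_half : Int.fract (x - 1 / 2) = Int.fract x - 1 / 2 :=
    Int.fract_eq_iff.2 ⟨by linarith, by linarith [Int.fract_lt_one x], ⌊x⌋, by
      rw [Int.fract]; ring⟩
  simp only [dAnti, frac, h_neg, h_half]
  ring

lemma dAnti_mul_dAnti_neg (x : ℚ) : dAnti x * dAnti (-x) = 0 := by
  rcases eq_or_ne (Int.fract x) 0 with h0 | h0
  · rw [dAnti_eq_zero_of_fract_eq_zero h0, zero_mul]
  rcases le_or_gt (1 / 2) (Int.fract x) with h | h
  · rw [dAnti_eq_zero_of_half_le_fract h, zero_mul]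
  · rw [dAnti_eq_zero_of_half_le_fract (x := -x) (by rw [Int.fract_neg h0]; linarith), mul_zero]

lemma fract_neg_div_two_add_fract_neg_div_two {a b : ℤ} (h : Odd (a + b)) :
    Int.fract (-(a : ℚ) / 2) + Int.fract (-(b : ℚ) / 2) = 1 / 2 := by
  have h_mod (n : ℤ) : Int.fract (-(n : ℚ) / 2) = ((-n % 2 : ℤ) : ℚ) / 2 := by
    simpa using Int.fract_div_intCast_eq_div_intCast_mod (k := ℚ) (m := -n) (n := 2)
  have h_sum : -a % 2 + -b % 2 = 1 := by
    obtain ⟨m, hm⟩ := h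
    omega
  rw [h_mod, h_mod, ← add_div, ← Int.cast_add, h_sum]
  norm_num

lemma d_eq_dAnti {k n₁ n₂ : ℤ} (hk : k ≠ 0) (h : Odd (n₁ + n₂)) :
    d k n₁ n₂ = dAnti (n₂ / k) := by
  obtain ⟨m, hm⟩ := h
  have hkQ : (k : ℚ) ≠ 0 := Int.cast_ne_zero.2 hk
  have h_last : -((k * n₁ + (k - 2) * n₂ : ℤ) : ℚ) / (2 * k) = (n₂ / k - 1 / 2) + (-m : ℤ) := by
    have hm' : (n₁ : ℚ) = 2 * m + 1 - n₂ := by exact_mod_cast (by omega : n₁ = 2 * m + 1 - n₂)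
    push_cast
    rw [hm']
    field_simp
    ring
  have h_halves := fract_neg_div_two_add_fract_neg_div_two (a := n₁) (b := n₂) ⟨m, hm⟩
  simp only [d, dAnti, frac, h_last, Int.fract_add_intCast, neg_div] at h_halves ⊢
  linear_combination h_halves

lemma d_mul_d_two_mul_sub {k n₁ n₂ : ℤ} (hk : k ≠ 0) (h : Odd (n₁ + n₂)) :
    d k n₁ n₂ * d k n₁ (2 * k - n₂) = 0 := by
  have h' : Odd (n₁ + (2 * k - n₂)) := by
    have : n₁ + (2 * k - n₂) = n₁ + n₂ + 2 * (k - n₂) := by ring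
    rw [this]
    exact h.add_even (even_two_mul _)
  have h_arg : (((2 * k - n₂ : ℤ) : ℚ) / k) = -(n₂ / k : ℚ) + (2 : ℤ) := by
    have hkQ : (k : ℚ) ≠ 0 := Int.cast_ne_zero.2 hk
    push_cast
    field_simp
    ring
  rw [d_eq_dAnti hk h, d_eq_dAnti hk h', h_arg, dAnti_add_intCast, dAnti_mul_dAnti_neg]

theorem stmt8_general (k : ℤ) :
    (∑ p ∈ ((({0, 1} : Finset ℤ) ×ˢ ((Finset.Icc 1 (2 * k - 1)).erase k)).filter
        (fun p => Odd (p.1 + p.2))),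
      d k p.1 p.2 * d k p.1 (2 * k - p.2) = 0) ∧
    (∀ p ∈ ((({0, 1} : Finset ℤ) ×ˢ ((Finset.Icc 1 (2 * k - 1)).erase k)).filter
        (fun p => Odd (p.1 + p.2))),
      d k p.1 p.2 * d k p.1 (2 * k - p.2) = 0) := by
  refine (fun h => ⟨Finset.sum_eq_zero h, h⟩) ?_
  rintro ⟨n₁, n₂⟩ hp
  simp only [Finset.mem_filter, Finset.mem_product, Finset.mem_erase, Finset.mem_Icc] at hp
  exact d_mul_d_two_mul_sub (by omega) hp.2

theorem stmt8 (k : ℤ) (hk : 3 ≤ k) (hkodd : Odd k) :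
    (∑ p ∈ ((({0, 1} : Finset ℤ) ×ˢ ((Finset.Icc 1 (2 * k - 1)).erase k)).filter
        (fun p => Odd (p.1 + p.2))),
      d k p.1 p.2 * d k p.1 (2 * k - p.2) = 0) ∧
    (∀ p ∈ ((({0, 1} : Finset ℤ) ×ˢ ((Finset.Icc 1 (2 * k - 1)).erase k)).filter
        (fun p => Odd (p.1 + p.2))),
      d k p.1 p.2 * d k p.1 (2 * k - p.2) = 0) :=
  stmt8_general k
end
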